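/- Let G be a locally compact NSS local group with special neighborhood 𝒰, and let Vₙ := {x ∈ G : ord(x) ≥ n}. Then (Vₙ)_{n≥1} is a decreasing sequence of compact symmetric neighborhoods of 1 forming a countable neighborhood basis of 1 in G; moreover for every neighborhood U of 1 and every m, for all sufficiently large n the product x₁⋯x_m is defined and lies in U for all x₁,…,x_m ∈ Vₙ. -/

import Mathlib

open scoped Topology Manifold ENNReal

/-- A local group in the sense of Goldbring's "Hilbert's Fifth Problem for Local Groups":
a Hausdorff-intended topological space `G` with a distinguished element `one`, a partial
inversion `inv` defined (i.e. meaningful) on the open set `Lambda`, and a partial product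
`mul` meaningful on the open set `Omega`. -/
structure LocalGroup (G : Type*) [TopologicalSpace G] where
  one : G
  Lambda : Set G
  Omega : Set (G × G)
  inv : G → G
  mul : G → G → G
  isOpen_Lambda : IsOpen Lambda
  isOpen_Omega : IsOpen Omega
  one_mem_Lambda : one ∈ Lambda
  pair_one_left : ∀ x : G, (one, x) ∈ Omega
  pair_one_right : ∀ x : G, (x, one) ∈ Omega
  continuousOn_inv : ContinuousOn inv Lambda
  continuousOn_mul : ContinuousOn (fun q : G × G => mul q.1 q.2) Omega
  one_mul : ∀ x : G, mul one x = x
  mul_one : ∀ x : G, mul x one = x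
  mem_inv_right : ∀ x ∈ Lambda, (x, inv x) ∈ Omega
  mem_inv_left : ∀ x ∈ Lambda, (inv x, x) ∈ Omega
  mul_inv_self : ∀ x ∈ Lambda, mul x (inv x) = one
  inv_mul_self : ∀ x ∈ Lambda, mul (inv x) x = one
  assoc : ∀ x y z : G, (x, y) ∈ Omega → (y, z) ∈ Omega → (mul x y, z) ∈ Omega →
    (x, mul y z) ∈ Omega → mul (mul x y) z = mul x (mul y z)

namespace LocalGroup

variable {G : Type*} {G' : Type*} [TopologicalSpace G] [TopologicalSpace G']

/-- The standing conventions of the paper: `Λ = G`, and whenever `(g,h) ∈ Ω` also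
`(h⁻¹, g⁻¹) ∈ Ω` with `(gh)⁻¹ = h⁻¹g⁻¹`. -/
def Std (L : LocalGroup G) : Prop :=
  L.Lambda = Set.univ ∧
    ∀ g h : G, (g, h) ∈ L.Omega →
      (L.inv h, L.inv g) ∈ L.Omega ∧ L.inv (L.mul g h) = L.mul (L.inv h) (L.inv g)

/-- A symmetric subset: contained in the domain of inversion and stable under it. -/
def IsSymmetric (L : LocalGroup G) (S : Set G) : Prop :=
  S ⊆ L.Lambda ∧ L.inv '' S = S

/-- A subgroup of a local group. -/
def IsSubgroup (L : LocalGroup G) (H : Set G) : Prop :=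
  L.one ∈ H ∧ H ⊆ L.Lambda ∧ (∀ x ∈ H, ∀ y ∈ H, (x, y) ∈ L.Omega) ∧
    (∀ x ∈ H, L.inv x ∈ H) ∧ ∀ x ∈ H, ∀ y ∈ H, L.mul x y ∈ H

/-- No small subgroups. -/
def NSS (L : LocalGroup G) : Prop :=
  ∃ U ∈ 𝓝 L.one, ∀ H : Set G, L.IsSubgroup H → H ⊆ U → H = {L.one}

/-- No small connected subgroups. -/
def NSCS (L : LocalGroup G) : Prop :=
  ∃ U ∈ 𝓝 L.one, ∀ H : Set G, L.IsSubgroup H → IsConnected H → H ⊆ U → H = {L.one}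

/-- `(a₁, …, aₙ)` represents `b`: all ways of multiplying the list are defined and equal `b`.
By convention the empty list represents `one`. -/
def Represents (L : LocalGroup G) : List G → G → Prop
  | [], b => b = L.one
  | [a], b => b = a
  | a :: c :: l, b =>
      ∀ i : ℕ, 1 ≤ i → i < (a :: c :: l).length →
        ∃ b₁ b₂ : G, L.Represents ((a :: c :: l).take i) b₁ ∧
          L.Represents ((a :: c :: l).drop i) b₂ ∧ (b₁, b₂) ∈ L.Omega ∧ L.mul b₁ b₂ = b
termination_by l => l.length
decreasing_by
  all_goals simp only [List.length_cons, List.length_take, List.length_drop] at *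
  all_goals omega

/-- `A^n`: all products of `n` elements of `A` (only meaningful when such products are defined). -/
def setPow (L : LocalGroup G) (A : Set G) (n : ℕ) : Set G :=
  {b | ∃ l : List G, l.length = n ∧ (∀ a ∈ l, a ∈ A) ∧ L.Represents l b}

/-- A chain `U₁ ⊇ U₂ ⊇ ⋯` of symmetric open neighborhoods of `1` such that products of `n`
elements of `Uₙ` are defined (the sets `𝒰ₙ` of the paper). -/
def IsProdChain (L : LocalGroup G) (U : ℕ → Set G) : Prop :=
  ∀ n : ℕ, 1 ≤ n →
    IsOpen (U n) ∧ L.one ∈ U n ∧ L.IsSymmetric (U n) ∧ U (n + 1) ⊆ U n ∧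
      ∀ l : List G, l.length = n → (∀ a ∈ l, a ∈ U n) → ∃ b, L.Represents l b

/-- `a^k` is defined and equal to `b`, for `k : ℤ` (with `a^(-n) := (a⁻¹)^n`). -/
def zpowRep (L : LocalGroup G) (a : G) : ℤ → G → Prop
  | Int.ofNat n, b => L.Represents (List.replicate n a) b
  | Int.negSucc n, b => L.Represents (List.replicate (n + 1) (L.inv a)) b

/-- A special neighborhood (relative to a product chain `U`): a compact symmetric
neighborhood of `1` contained in `U 2`, containing no nontrivial subgroup, on which
squaring is injective. -/
def IsSpecialNbhd (L : LocalGroup G) (U : ℕ → Set G) (SU : Set G) : Prop :=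
  IsCompact SU ∧ SU ∈ 𝓝 L.one ∧ L.IsSymmetric SU ∧ SU ⊆ U 2 ∧
    (∀ H : Set G, L.IsSubgroup H → H ⊆ SU → H = {L.one}) ∧
    ∀ x ∈ SU, ∀ y ∈ SU, L.mul x x = L.mul y y → x = y

/-- `Λ_U` for the restriction `G|U`. -/
def restLambda (L : LocalGroup G) (U : Set G) : Set G := L.Lambda ∩ U ∩ L.inv ⁻¹' U

/-- `Ω_U` for the restriction `G|U`. -/
def restOmega (L : LocalGroup G) (U : Set G) : Set (G × G) :=
  {q | q ∈ L.Omega ∧ q.1 ∈ U ∧ q.2 ∈ U ∧ L.mul q.1 q.2 ∈ U}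

/-- A morphism of local groups `L → L'`. -/
def IsMorphism (L : LocalGroup G) (L' : LocalGroup G') (f : G → G') : Prop :=
  Continuous f ∧ f L.one = L'.one ∧
    (∀ x ∈ L.Lambda, f x ∈ L'.Lambda ∧ f (L.inv x) = L'.inv (f x)) ∧
    ∀ x y : G, (x, y) ∈ L.Omega → ((f x, f y) ∈ L'.Omega ∧ f (L.mul x y) = L'.mul (f x) (f y))

/-- `f` is a morphism of local groups `G|U → G'|U'` between restrictions. -/
def IsRestMorphism (L : LocalGroup G) (L' : LocalGroup G') (U : Set G) (U' : Set G')
    (f : G → G') : Prop :=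
  ContinuousOn f U ∧ Set.MapsTo f U U' ∧ f L.one = L'.one ∧
    (∀ x ∈ L.restLambda U, f x ∈ L'.restLambda U' ∧ f (L.inv x) = L'.inv (f x)) ∧
    ∀ x y : G, (x, y) ∈ L.restOmega U →
      ((f x, f y) ∈ L'.restOmega U' ∧ f (L.mul x y) = L'.mul (f x) (f y))

/-- Local isomorphism: a homeomorphism between open neighborhoods of the identities which
is a morphism of restrictions in both directions. -/
def LocallyIsomorphic (L : LocalGroup G) (L' : LocalGroup G') : Prop :=
  ∃ (U : Set G) (U' : Set G') (f : G → G') (g : G' → G),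
    IsOpen U ∧ L.one ∈ U ∧ IsOpen U' ∧ L'.one ∈ U' ∧
      Set.BijOn f U U' ∧ (∀ x ∈ U, g (f x) = x) ∧ (∀ y ∈ U', f (g y) = y) ∧
      L.IsRestMorphism L' U U' f ∧ L'.IsRestMorphism L U' U g

/-- A topological group regarded as a local group with `Λ = G` and `Ω = G × G`. -/
def ofGroup (H : Type*) [TopologicalSpace H] [Group H] [IsTopologicalGroup H] : LocalGroup H where
  one := 1
  Lambda := Set.univ
  Omega := Set.univ
  inv := fun x => x⁻¹
  mul := fun x y => x * y
  isOpen_Lambda := isOpen_univ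
  isOpen_Omega := isOpen_univ
  one_mem_Lambda := trivial
  pair_one_left := fun _ => trivial
  pair_one_right := fun _ => trivial
  continuousOn_inv := continuous_inv.continuousOn
  continuousOn_mul := (continuous_fst.mul continuous_snd).continuousOn
  one_mul := fun x => _root_.one_mul x
  mul_one := fun x => _root_.mul_one x
  mem_inv_right := fun _ _ => trivial
  mem_inv_left := fun _ _ => trivial
  mul_inv_self := fun x _ => mul_inv_cancel x
  inv_mul_self := fun x _ => inv_mul_cancel x
  assoc := fun x y z _ _ _ _ => mul_assoc x y z

/-- A bundled (finite-dimensional, real) Lie group in the Mathlib sense. -/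
structure BundledLieGroup : Type 1 where
  n : ℕ
  carrier : Type
  [ts : TopologicalSpace carrier]
  [t2 : T2Space carrier]
  [grp : Group carrier]
  [tg : IsTopologicalGroup carrier]
  [cs : ChartedSpace (EuclideanSpace ℝ (Fin n)) carrier]
  [lie : LieGroup (𝓡 n) (⊤ : ℕ∞) carrier]

/-- `L` is locally isomorphic to (the local group underlying) a Lie group. -/
def IsLieLocallyIsomorphic (L : LocalGroup G) : Prop :=
  ∃ B : BundledLieGroup,
    letI := B.ts; letI := B.grp; letI := B.tg
    L.LocallyIsomorphic (ofGroup B.carrier)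

/-- A local one-parameter subgroup of `L`, with domain `(-r, r)` (where `r ∈ (0,∞]`). -/
structure LocalOnePS (L : LocalGroup G) where
  r : ℝ≥0∞
  r_pos : 0 < r
  toFun : ℝ → G
  mem_Lambda : ∀ t : ℝ, ENNReal.ofReal |t| < r → toFun t ∈ L.Lambda
  continuousOn : ContinuousOn toFun {t : ℝ | ENNReal.ofReal |t| < r}
  add : ∀ s t : ℝ, ENNReal.ofReal |s| < r → ENNReal.ofReal |t| < r →
    ENNReal.ofReal |s + t| < r →
      (toFun s, toFun t) ∈ L.Omega ∧ toFun (s + t) = L.mul (toFun s) (toFun t)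

variable {L : LocalGroup G}

/-- Equivalence (equality of germs at 0) of local one-parameter subgroups. -/
def OnePSEquiv (X Y : LocalOnePS L) : Prop :=
  ∃ s : ℝ, 0 < s ∧ ENNReal.ofReal s < X.r ∧ ENNReal.ofReal s < Y.r ∧
    ∀ t : ℝ, |t| < s → X.toFun t = Y.toFun t

theorem onePS_exists_small (X : LocalOnePS L) : ∃ s : ℝ, 0 < s ∧ ENNReal.ofReal s < X.r := by
  rcases eq_or_ne X.r ⊤ with h | h
  · exact ⟨1, one_pos, by simp [h]⟩
  · have h0 : X.r ≠ 0 := ne_of_gt X.r_pos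
    have htr : 0 < X.r.toReal := ENNReal.toReal_pos h0 h
    refine ⟨X.r.toReal / 2, by linarith, ?_⟩
    rw [ENNReal.ofReal_lt_iff_lt_toReal (by linarith) h]
    linarith

instance onePSSetoid (L : LocalGroup G) : Setoid (LocalOnePS L) where
  r := OnePSEquiv
  iseqv := by
    constructor
    · intro X
      obtain ⟨s, hs, hsr⟩ := onePS_exists_small X
      exact ⟨s, hs, hsr, hsr, fun _ _ => rfl⟩
    · rintro X Y ⟨s, hs, h1, h2, h3⟩
      exact ⟨s, hs, h2, h1, fun t ht => (h3 t ht).symm⟩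
    · rintro X Y Z ⟨s1, hs1, hX1, hY1, hag1⟩ ⟨s2, hs2, hY2, hZ2, hag2⟩
      refine ⟨min s1 s2, lt_min hs1 hs2, ?_, ?_, fun t ht => ?_⟩
      · exact lt_of_le_of_lt (ENNReal.ofReal_le_ofReal (min_le_left _ _)) hX1
      · exact lt_of_le_of_lt (ENNReal.ofReal_le_ofReal (min_le_right _ _)) hZ2
      · rw [hag1 t (lt_of_lt_of_le ht (min_le_left _ _)),
          hag2 t (lt_of_lt_of_le ht (min_le_right _ _))]

/-- `L(G)`: the set of germs at `0` of local one-parameter subgroups of `L`. -/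
abbrev LGQuot (L : LocalGroup G) := Quotient (onePSSetoid L)

/-- The trivial local one-parameter subgroup `O`. -/
noncomputable def constOnePS (L : LocalGroup G) : LocalOnePS L where
  r := ⊤
  r_pos := by simp
  toFun := fun _ => L.one
  mem_Lambda := fun _ _ => L.one_mem_Lambda
  continuousOn := continuousOn_const
  add := fun s t _ _ _ => ⟨L.pair_one_left L.one, (L.one_mul L.one).symm⟩

/-- The domain of a germ of local one-parameter subgroups: the union of the domains of its
representatives. -/
def germDomain (L : LocalGroup G) (X : LGQuot L) : Set ℝ :=
  {t | ∃ Y : LocalOnePS L, ⟦Y⟧ = X ∧ ENNReal.ofReal |t| < Y.r}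

/-- Evaluation of a germ at a point of its domain (junk value outside). This is
well defined, i.e. independent of the choice of representative, by the basic theory
of local one-parameter subgroups. -/
noncomputable def germEval (L : LocalGroup G) (X : LGQuot L) (t : ℝ) : G := by
  classical exact if h : ∃ Y : LocalOnePS L, ⟦Y⟧ = X ∧ ENNReal.ofReal |t| < Y.r then h.choose.toFun t
  else L.one

/-- The topology on `L(G)` generated by the subbasic sets `B_{C,U}` for `C ⊆ (-2,2)`
compact and `U ⊆ G` open. -/
instance germTopology (L : LocalGroup G) : TopologicalSpace (LGQuot L) :=
  TopologicalSpace.generateFrom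
    {S | ∃ (C : Set ℝ) (U : Set G), IsCompact C ∧ C ⊆ Set.Ioo (-2 : ℝ) 2 ∧ IsOpen U ∧
      S = {X : LGQuot L | C ⊆ germDomain L X ∧ ∀ t ∈ C, germEval L X t ∈ U}}

/-- A sublocal group `H` of `L`, with associated neighborhood `V`. -/
def IsSublocalGroup (L : LocalGroup G) (H V : Set G) : Prop :=
  L.one ∈ H ∧ IsOpen V ∧ L.one ∈ V ∧ H ⊆ V ∧ (∀ x ∈ closure H, x ∈ V → x ∈ H) ∧
    (∀ x ∈ H, x ∈ L.Lambda → L.inv x ∈ V → L.inv x ∈ H) ∧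
    ∀ x ∈ H, ∀ y ∈ H, (x, y) ∈ L.Omega → L.mul x y ∈ V → L.mul x y ∈ H

/-- A normal sublocal group `H` of `L`, with normalizing neighborhood `V`. -/
def IsNormalSublocalGroup (L : LocalGroup G) (H V : Set G) : Prop :=
  L.IsSublocalGroup H V ∧ L.IsSymmetric V ∧
    ∀ y ∈ V, ∀ x ∈ H, ∀ b : G, L.Represents [y, x, L.inv y] b → b ∈ V → b ∈ H

/-- The coset relation `E_H` on `W`. -/
def quotRel (L : LocalGroup G) (H W : Set G) : ↥W → ↥W → Prop :=
  fun x y => L.mul (L.inv ↑x) ↑y ∈ H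

/-- The local coset space `W/E_H`, with the quotient topology. -/
abbrev QuotCarrier (L : LocalGroup G) (H W : Set G) := Quot (L.quotRel H W)

/-- `Q` is the local quotient group structure `(G/H)_W` on `W/E_H`. -/
def IsQuotStructure (L : LocalGroup G) (H W : Set G) (h1W : L.one ∈ W)
    (Q : LocalGroup (L.QuotCarrier H W)) : Prop :=
  Q.one = Quot.mk (L.quotRel H W) ⟨L.one, h1W⟩ ∧
    Q.Lambda = Set.univ ∧
    (∀ (x : ↥W) (hx : L.inv ↑x ∈ W),
      Q.inv (Quot.mk (L.quotRel H W) x) = Quot.mk (L.quotRel H W) ⟨L.inv ↑x, hx⟩) ∧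
    Q.Omega = {q | ∃ x y : ↥W, ((x : G), (y : G)) ∈ L.Omega ∧ L.mul ↑x ↑y ∈ W ∧
      q = (Quot.mk (L.quotRel H W) x, Quot.mk (L.quotRel H W) y)} ∧
    ∀ (x y : ↥W) (_ : ((x : G), (y : G)) ∈ L.Omega) (hm : L.mul ↑x ↑y ∈ W),
      Q.mul (Quot.mk (L.quotRel H W) x) (Quot.mk (L.quotRel H W) y) =
        Quot.mk (L.quotRel H W) ⟨L.mul ↑x ↑y, hm⟩

/-- The sup-norm of a real-valued function. -/
noncomputable def supNorm (f : G → ℝ) : ℝ := ⨆ x : G, |f x|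

/-- `W²` = the set of products of two elements of `W`. -/
def sqSet (L : LocalGroup G) (W : Set G) : Set G :=
  {z | ∃ a ∈ W, ∃ b ∈ W, (a, b) ∈ L.Omega ∧ L.mul a b = z}

/-- The (left-translation) action `a · f` of `a` on functions supported in `W`:
`(a·f)(x) = f (a⁻¹ x)` for `x ∈ W²` and `0` otherwise. -/
noncomputable def act (L : LocalGroup G) (W : Set G) (a : G) (f : G → ℝ) : G → ℝ := by
  classical exact fun x => if x ∈ L.sqSet W then f (L.mul (L.inv a) x) else 0

/-- `ord(x) ≥ n` relative to the special neighborhood `SU`: all powers `x^k`, `|k| ≤ n`,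
are defined and lie in `SU`. -/
def ordGE (L : LocalGroup G) (SU : Set G) (n : ℕ) : Set G :=
  {x | ∀ k : ℤ, k.natAbs ≤ n → ∃ b : G, L.zpowRep x k b ∧ b ∈ SU}

end LocalGroup

open LocalGroup

/-!
Since `S ⊆ U₂`, any two elements of `S` can be multiplied, so the local group is associative
on `S` and powers that stay in `S` obey the usual exponent laws. Consequently `ord(x) ≥ n` says
exactly that `x, …, xⁿ` and `x⁻¹, …, x⁻ⁿ` lie in `S`: by continuity of multiplication this is a
closed condition, and an open one once `S` is replaced by its interior, which makes `Vₙ` a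
compact symmetric neighbourhood of `1`. An element of every `Vₙ` has all its integer powers in
`S`; they form a subgroup, which is trivial, so `⋂ Vₙ = {1}` and compactness forces the `Vₙ`
into any neighbourhood of `1`. The last claim then follows from continuity of the `m`-fold
product at `(1, …, 1)`.
-/

namespace LocalGroup

variable {G : Type*} [TopologicalSpace G] {L : LocalGroup G}

section Algebra

variable (L)

theorem inv_one : L.inv L.one = L.one := by
  simpa only [L.one_mul] using L.mul_inv_self L.one L.one_mem_Lambda

theorem inv_eq_of_mul_eq_one {x y : G} (hx : x ∈ L.Lambda) (hxy : (x, y) ∈ L.Omega)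
    (h : L.mul x y = L.one) : L.inv x = y := by
  have hassoc := L.assoc (L.inv x) x y (L.mem_inv_left x hx) hxy
    (by rw [L.inv_mul_self x hx]; exact L.pair_one_left y)
    (by rw [h]; exact L.pair_one_right _)
  rwa [L.inv_mul_self x hx, L.one_mul, h, L.mul_one, eq_comm] at hassoc

theorem inv_inv {x : G} (hx : x ∈ L.Lambda) (hx' : L.inv x ∈ L.Lambda) : L.inv (L.inv x) = x :=
  L.inv_eq_of_mul_eq_one hx' (L.mem_inv_left x hx) (L.inv_mul_self x hx)

variable {L}

theorem IsSymmetric.inv_mem {S : Set G} (hS : L.IsSymmetric S) {x : G} (hx : x ∈ S) :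
    L.inv x ∈ S :=
  hS.2 ▸ Set.mem_image_of_mem L.inv hx

theorem mul_assoc_of_mem {S : Set G} (hS : S ×ˢ S ⊆ L.Omega) {a b c : G} (ha : a ∈ S)
    (hb : b ∈ S) (hc : c ∈ S) (hab : L.mul a b ∈ S) (hbc : L.mul b c ∈ S) :
    L.mul (L.mul a b) c = L.mul a (L.mul b c) :=
  L.assoc a b c (hS ⟨ha, hb⟩) (hS ⟨hb, hc⟩) (hS ⟨hab, hc⟩) (hS ⟨ha, hbc⟩)

end Algebra

section Products

theorem represents_nil_iff {b : G} : L.Represents [] b ↔ b = L.one := by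
  rw [Represents]

theorem represents_singleton_iff {a b : G} : L.Represents [a] b ↔ b = a := by
  rw [Represents]

theorem represents_iff_of_two_le {l : List G} (hl : 2 ≤ l.length) {b : G} :
    L.Represents l b ↔ ∀ i, 1 ≤ i → i < l.length →
      ∃ b₁ b₂, L.Represents (l.take i) b₁ ∧ L.Represents (l.drop i) b₂ ∧
        (b₁, b₂) ∈ L.Omega ∧ L.mul b₁ b₂ = b := by
  match l, hl with
  | _ :: _ :: _, _ => rw [Represents]

variable (L) in
def prod (l : List G) : G :=
  l.foldr L.mul L.one

theorem prod_singleton (a : G) : L.prod [a] = a :=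
  L.mul_one a

theorem Represents.eq_prod : ∀ {l : List G} {b : G}, L.Represents l b → b = L.prod l
  | [], _, h => represents_nil_iff.1 h
  | [a], _, h => by rw [prod_singleton, ← represents_singleton_iff]; exact h
  | a :: c :: t, _, h => by
    obtain ⟨b₁, b₂, h₁, h₂, -, rfl⟩ := (represents_iff_of_two_le (by simp)).1 h 1 le_rfl (by simp)
    rw [represents_singleton_iff.1 h₁, h₂.eq_prod]
    rfl

theorem IsSpecialNbhd.prod_subset_omega {Un : ℕ → Set G} {S : Set G} (hUn : L.IsProdChain Un)
    (hS : L.IsSpecialNbhd Un S) : S ×ˢ S ⊆ L.Omega := by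
  rintro ⟨a, b⟩ ⟨ha, hb⟩
  obtain ⟨c, hc⟩ := (hUn 2 one_le_two).2.2.2.2 [a, b] rfl (by
    simp only [List.mem_cons, List.not_mem_nil, or_false, forall_eq_or_imp, forall_eq]
    exact ⟨hS.2.2.2.1 ha, hS.2.2.2.1 hb⟩)
  obtain ⟨b₁, b₂, h₁, h₂, hΩ, -⟩ := (represents_iff_of_two_le (by simp)).1 hc 1 le_rfl (by simp)
  simp only [List.take, List.drop, represents_singleton_iff] at h₁ h₂
  rwa [h₁, h₂] at hΩ

theorem exists_nhds_prod_mem {U : Set G} (hU : U ∈ 𝓝 L.one) (m : ℕ) :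
    ∃ P ∈ 𝓝 L.one, ∀ l : List G, l.length = m → (∀ a ∈ l, a ∈ P) → L.prod l ∈ U := by
  induction m generalizing U with
  | zero => exact ⟨Set.univ, Filter.univ_mem, fun l hl _ => List.length_eq_zero_iff.1 hl ▸
      mem_of_mem_nhds hU⟩
  | succ m ih =>
    have hmul : Filter.Tendsto (fun q : G × G => L.mul q.1 q.2) (𝓝 L.one ×ˢ 𝓝 L.one) (𝓝 L.one) := by
      simpa only [L.one_mul, nhds_prod_eq] using (L.continuousOn_mul.continuousAt
        (L.isOpen_Omega.mem_nhds (L.pair_one_left L.one))).tendsto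
    obtain ⟨A, hA, B, hB, hAB⟩ := Filter.mem_prod_iff.1 (hmul hU)
    obtain ⟨P, hP, hPB⟩ := ih hB
    refine ⟨A ∩ P, Filter.inter_mem hA hP, fun l hl hmem => ?_⟩
    obtain ⟨a, t, rfl⟩ := List.exists_cons_of_length_eq_add_one hl
    simp only [List.mem_cons, forall_eq_or_imp] at hmem
    exact hAB (Set.mk_mem_prod hmem.1.1 (hPB t (by simpa using hl) fun x hx => (hmem.2 x hx).2))

theorem IsProdChain.exists_nhds_represents_mem {Un : ℕ → Set G} (hUn : L.IsProdChain Un)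
    {U : Set G} (hU : U ∈ 𝓝 L.one) (m : ℕ) :
    ∃ P ∈ 𝓝 L.one, ∀ l : List G, l.length = m → (∀ a ∈ l, a ∈ P) →
      ∃ b, L.Represents l b ∧ b ∈ U := by
  obtain ⟨P, hP, hPU⟩ := exists_nhds_prod_mem hU m
  rcases Nat.eq_zero_or_pos m with rfl | hm
  · exact ⟨P, hP, fun l hl _ => ⟨L.one, List.length_eq_zero_iff.1 hl ▸ represents_nil_iff.2 rfl,
      mem_of_mem_nhds hU⟩⟩
  refine ⟨P ∩ Un m, Filter.inter_mem hP ((hUn m hm).1.mem_nhds (hUn m hm).2.1),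
    fun l hl hmem => ?_⟩
  obtain ⟨b, hb⟩ := (hUn m hm).2.2.2.2 l hl fun a ha => (hmem a ha).2
  exact ⟨b, hb, hb.eq_prod ▸ hPU l hl fun a ha => (hmem a ha).1⟩

end Products

section Powers

variable (L) in
def npow (x : G) : ℕ → G
  | 0 => L.one
  | n + 1 => L.mul x (npow x n)

variable (L) in
def zpow (x : G) : ℤ → G
  | Int.ofNat n => L.npow x n
  | Int.negSucc n => L.npow (L.inv x) (n + 1)

theorem npow_one (x : G) : L.npow x 1 = x :=
  L.mul_one x

theorem zpow_one (x : G) : L.zpow x 1 = x :=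
  npow_one x

theorem zpow_neg_one (x : G) : L.zpow x (-1) = L.inv x :=
  npow_one (L.inv x)

theorem one_npow (n : ℕ) : L.npow L.one n = L.one := by
  induction n with
  | zero => rfl
  | succ n ih => exact (L.one_mul _).trans ih

theorem prod_replicate (x : G) (n : ℕ) : L.prod (List.replicate n x) = L.npow x n := by
  induction n with
  | zero => rfl
  | succ n ih => exact congrArg (L.mul x) ih

theorem zpow_neg_natCast (x : G) (n : ℕ) : L.zpow x (-n) = L.npow (L.inv x) n := by
  cases n <;> rfl

theorem zpowRep.eq_zpow {x b : G} {k : ℤ} (h : L.zpowRep x k b) : b = L.zpow x k := by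
  cases k <;> exact h.eq_prod.trans (prod_replicate _ _)

variable {S : Set G}

theorem zpow_mem_of_mem_ordGE {x : G} {k : ℤ} {n : ℕ} (hk : k.natAbs ≤ n)
    (hx : x ∈ ordGE L S n) : L.zpow x k ∈ S := by
  obtain ⟨b, hb, hbS⟩ := hx k hk
  rwa [hb.eq_zpow] at hbS

variable (hS : S ×ˢ S ⊆ L.Omega)
include hS

theorem npow_add {x : G} {n : ℕ} (hpow : ∀ j ≤ n, L.npow x j ∈ S) {i j : ℕ} (hij : i + j ≤ n) :
    L.mul (L.npow x i) (L.npow x j) = L.npow x (i + j) := by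
  induction i with
  | zero => rw [Nat.zero_add]; exact L.one_mul _
  | succ i ih =>
    have hx : x ∈ S := npow_one x ▸ hpow 1 (by omega)
    rw [Nat.add_right_comm, npow, npow, ← ih (by omega)]
    exact mul_assoc_of_mem hS hx (hpow i (by omega)) (hpow j (by omega)) (hpow (i + 1) (by omega))
      (ih (by omega) ▸ hpow (i + j) (by omega))

theorem represents_replicate {x : G} {n : ℕ} (hpow : ∀ j ≤ n, L.npow x j ∈ S) :
    L.Represents (List.replicate n x) (L.npow x n) := by
  induction n using Nat.strong_induction_on with
  | _ n ih =>
    match n with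
    | 0 => exact represents_nil_iff.2 rfl
    | 1 => exact represents_singleton_iff.2 (npow_one x)
    | m + 2 =>
      refine (represents_iff_of_two_le (by simp)).2 fun i hi₁ hi₂ => ?_
      rw [List.length_replicate] at hi₂
      refine ⟨L.npow x i, L.npow x (m + 2 - i), ?_, ?_,
        hS ⟨hpow i (by omega), hpow _ (by omega)⟩, ?_⟩
      · rw [List.take_replicate, min_eq_left hi₂.le]
        exact ih i hi₂ fun j hj => hpow j (by omega)
      · rw [List.drop_replicate]
        exact ih _ (by omega) fun j hj => hpow j (by omega)
      · rw [npow_add hS hpow (by omega), Nat.add_sub_cancel' hi₂.le]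

theorem mem_ordGE_iff {x : G} {n : ℕ} :
    x ∈ ordGE L S n ↔ ∀ j ≤ n, L.npow x j ∈ S ∧ L.npow (L.inv x) j ∈ S := by
  constructor
  · intro hx j hj
    refine ⟨zpow_mem_of_mem_ordGE (k := j) (by simpa using hj) hx, ?_⟩
    rw [← zpow_neg_natCast]
    exact zpow_mem_of_mem_ordGE (by simpa using hj) hx
  · intro hx k hk
    cases k with
    | ofNat m =>
      exact ⟨_, represents_replicate hS fun j hj => (hx j (hj.trans hk)).1, (hx m hk).1⟩
    | negSucc m =>
      replace hk : m + 1 ≤ n := hk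
      exact ⟨_, represents_replicate hS fun j hj => (hx j (hj.trans hk)).2, (hx _ hk).2⟩

end Powers

section Topology

variable (L) in
/-- `x ∈ L.powersIn T n` iff `x, x², …, xⁿ ∈ T`. -/
def powersIn (T : Set G) (n : ℕ) : Set G :=
  {x | ∀ j < n, L.npow x (j + 1) ∈ T}

variable {T : Set G}

theorem powersIn_zero : L.powersIn T 0 = Set.univ :=
  Set.eq_univ_of_forall fun _ _ h => absurd h (Nat.not_lt_zero _)

theorem powersIn_succ (n : ℕ) :
    L.powersIn T (n + 1) = L.powersIn T n ∩ (L.npow · (n + 1)) ⁻¹' T := by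
  ext x
  simp only [powersIn, Set.mem_ofPred_eq, Set.mem_inter_iff, Set.mem_preimage,
    Nat.lt_succ_iff_lt_or_eq, or_imp, forall_and, forall_eq]

theorem powersIn_mono {T' : Set G} (h : T ⊆ T') (n : ℕ) : L.powersIn T n ⊆ L.powersIn T' n :=
  fun _ hx j hj => h (hx j hj)

theorem powersIn_subset {n : ℕ} (hn : 1 ≤ n) : L.powersIn T n ⊆ T :=
  fun x hx => by simpa only [Nat.zero_add, npow_one] using hx 0 hn

theorem one_mem_powersIn (h1 : L.one ∈ T) (n : ℕ) : L.one ∈ L.powersIn T n :=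
  fun j _ => by rwa [one_npow]

theorem continuousOn_npow (hT : T ×ˢ T ⊆ L.Omega) (n : ℕ) :
    ContinuousOn (L.npow · (n + 1)) (L.powersIn T n) := by
  induction n with
  | zero =>
    simp only [Nat.zero_add, npow_one]
    exact continuousOn_id
  | succ n ih =>
    have hsub : L.powersIn T (n + 1) ⊆ L.powersIn T n := by
      rw [powersIn_succ]
      exact Set.inter_subset_left
    exact L.continuousOn_mul.comp (continuousOn_id.prodMk (ih.mono hsub))
      fun x hx => hT ⟨powersIn_subset (by omega) hx, hx n (by omega)⟩

theorem isClosed_powersIn (hT : T ×ˢ T ⊆ L.Omega) (hTc : IsClosed T) (n : ℕ) :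
    IsClosed (L.powersIn T n) := by
  induction n with
  | zero => rw [powersIn_zero]; exact isClosed_univ
  | succ n ih =>
    rw [powersIn_succ]
    exact (continuousOn_npow hT n).preimage_isClosed_of_isClosed ih hTc

theorem isOpen_powersIn (hT : T ×ˢ T ⊆ L.Omega) (hTo : IsOpen T) (n : ℕ) :
    IsOpen (L.powersIn T n) := by
  induction n with
  | zero => rw [powersIn_zero]; exact isOpen_univ
  | succ n ih =>
    rw [powersIn_succ]
    exact (continuousOn_npow hT n).isOpen_inter_preimage ih hTo

variable {S : Set G}

theorem ordGE_antitone : Antitone (ordGE L S) :=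
  fun _ _ h _ hx k hk => hx k (hk.trans h)

theorem ordGE_subset_self {n : ℕ} (hn : 1 ≤ n) : ordGE L S n ⊆ S := fun x hx => by
  simpa only [zpow_one] using zpow_mem_of_mem_ordGE (k := 1) hn hx

theorem ordGE_eq_inter (hS : S ×ˢ S ⊆ L.Omega) (h1 : L.one ∈ S) (n : ℕ) :
    ordGE L S n = L.powersIn S n ∩ L.inv ⁻¹' L.powersIn S n := by
  ext x
  rw [mem_ordGE_iff hS]
  constructor
  · exact fun h => ⟨fun j hj => (h (j + 1) hj).1, fun j hj => (h (j + 1) hj).2⟩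
  · rintro ⟨h₁, h₂⟩ (_ | j) hj
    · exact ⟨h1, h1⟩
    · exact ⟨h₁ j hj, h₂ j hj⟩

theorem isClosed_ordGE (hS : S ×ˢ S ⊆ L.Omega) (h1 : L.one ∈ S) (hSΛ : S ⊆ L.Lambda)
    (hSc : IsClosed S) {n : ℕ} (hn : 1 ≤ n) : IsClosed (ordGE L S n) := by
  rw [ordGE_eq_inter hS h1]
  exact (L.continuousOn_inv.mono ((powersIn_subset hn).trans hSΛ)).preimage_isClosed_of_isClosed
    (isClosed_powersIn hS hSc n) (isClosed_powersIn hS hSc n)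

theorem isCompact_ordGE [T2Space G] (hS : S ×ˢ S ⊆ L.Omega) (h1 : L.one ∈ S)
    (hSΛ : S ⊆ L.Lambda) (hSc : IsCompact S) {n : ℕ} (hn : 1 ≤ n) : IsCompact (ordGE L S n) :=
  hSc.of_isClosed_subset (isClosed_ordGE hS h1 hSΛ hSc.isClosed hn) (ordGE_subset_self hn)

theorem ordGE_mem_nhds (hS : S ×ˢ S ⊆ L.Omega) (hS1 : S ∈ 𝓝 L.one) (n : ℕ) :
    ordGE L S n ∈ 𝓝 L.one := by
  have hT : interior S ×ˢ interior S ⊆ L.Omega :=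
    (Set.prod_mono interior_subset interior_subset).trans hS
  have hO := isOpen_powersIn hT isOpen_interior n
  have h1O := one_mem_powersIn (L := L) (mem_interior_iff_mem_nhds.2 hS1) n
  have hopen := (L.continuousOn_inv.mono Set.inter_subset_left).isOpen_inter_preimage
    (L.isOpen_Lambda.inter hO) hO
  refine Filter.mem_of_superset (hopen.mem_nhds ⟨⟨L.one_mem_Lambda, h1O⟩, ?_⟩) ?_
  · rw [Set.mem_preimage, L.inv_one]
    exact h1O
  · rw [ordGE_eq_inter hS (mem_of_mem_nhds hS1)]
    exact fun x hx => ⟨powersIn_mono interior_subset n hx.1.2, powersIn_mono interior_subset n hx.2⟩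

theorem isSymmetric_ordGE (hS : S ×ˢ S ⊆ L.Omega) (hSym : L.IsSymmetric S) {n : ℕ}
    (hn : 1 ≤ n) : L.IsSymmetric (ordGE L S n) := by
  have hinv : ∀ x ∈ ordGE L S n, L.inv x ∈ ordGE L S n ∧ L.inv (L.inv x) = x := by
    intro x hx
    have hxS := ordGE_subset_self hn hx
    have hinv := L.inv_inv (hSym.1 hxS) (hSym.1 (hSym.inv_mem hxS))
    refine ⟨(mem_ordGE_iff hS).2 fun j hj => ?_, hinv⟩
    rw [hinv]
    exact ((mem_ordGE_iff hS).1 hx j hj).symm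
  refine ⟨(ordGE_subset_self hn).trans hSym.1, Set.Subset.antisymm ?_ ?_⟩
  · rintro _ ⟨x, hx, rfl⟩
    exact (hinv x hx).1
  · exact fun x hx => ⟨L.inv x, (hinv x hx).1, (hinv x hx).2⟩

end Topology

section NoSmallSubgroups

variable {S : Set G} (hS : S ×ˢ S ⊆ L.Omega) (hSΛ : S ⊆ L.Lambda) {x : G}
  (hx : ∀ k, L.zpow x k ∈ S)
include hS hSΛ hx

theorem zpow_add_one (k : ℤ) : L.zpow x (k + 1) = L.mul x (L.zpow x k) := by
  cases k with
  | ofNat n => rfl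
  | negSucc n =>
    have hx₁ : x ∈ S := by simpa only [zpow_one] using hx 1
    have hinv : L.inv x ∈ S := by simpa only [zpow_neg_one] using hx (-1)
    have hxΛ := hSΛ hx₁
    rw [show Int.negSucc n + 1 = -(n : ℤ) by omega, zpow_neg_natCast]
    have hassoc := mul_assoc_of_mem hS hx₁ hinv (zpow_neg_natCast x n ▸ hx (-n))
      (by rw [L.mul_inv_self x hxΛ]; exact hx 0) (hx (Int.negSucc n))
    rwa [L.mul_inv_self x hxΛ, L.one_mul] at hassoc

theorem zpow_sub_one (k : ℤ) : L.zpow x (k - 1) = L.mul (L.inv x) (L.zpow x k) := by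
  have hx₁ : x ∈ S := by simpa only [zpow_one] using hx 1
  have hinv : L.inv x ∈ S := by simpa only [zpow_neg_one] using hx (-1)
  have hxΛ := hSΛ hx₁
  have hk := zpow_add_one hS hSΛ hx (k - 1)
  rw [sub_add_cancel] at hk
  rw [hk, ← mul_assoc_of_mem hS hinv hx₁ (hx (k - 1))
    (by rw [L.inv_mul_self x hxΛ]; exact hx 0) (hk ▸ hx k), L.inv_mul_self x hxΛ, L.one_mul]

theorem zpow_add (a b : ℤ) : L.mul (L.zpow x a) (L.zpow x b) = L.zpow x (a + b) := by
  induction a using Int.induction_on with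
  | zero => rw [zero_add]; exact L.one_mul _
  | succ a ih =>
    rw [add_right_comm, zpow_add_one hS hSΛ hx, zpow_add_one hS hSΛ hx, ← ih]
    exact mul_assoc_of_mem hS (by simpa only [zpow_one] using hx 1) (hx a) (hx b)
      (zpow_add_one hS hSΛ hx a ▸ hx _) (ih ▸ hx _)
  | pred a ih =>
    rw [sub_add_eq_add_sub, zpow_sub_one hS hSΛ hx, zpow_sub_one hS hSΛ hx, ← ih]
    exact mul_assoc_of_mem hS (by simpa only [zpow_neg_one] using hx (-1)) (hx _) (hx b)
      (zpow_sub_one hS hSΛ hx _ ▸ hx _) (ih ▸ hx _)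

theorem inv_zpow (k : ℤ) : L.inv (L.zpow x k) = L.zpow x (-k) :=
  L.inv_eq_of_mul_eq_one (hSΛ (hx k)) (hS ⟨hx k, hx (-k)⟩)
    (by rw [zpow_add hS hSΛ hx, add_neg_cancel]; rfl)

/-- The integer powers of `x` form a subgroup of `L` inside `S`. -/
theorem eq_one_of_forall_zpow_mem (hsub : ∀ H, L.IsSubgroup H → H ⊆ S → H = {L.one}) :
    x = L.one := by
  have hH : L.IsSubgroup (Set.range (L.zpow x)) := by
    refine ⟨⟨0, rfl⟩, Set.range_subset_iff.2 fun k => hSΛ (hx k), ?_, ?_, ?_⟩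
    · rintro _ ⟨a, rfl⟩ _ ⟨b, rfl⟩
      exact hS ⟨hx a, hx b⟩
    · rintro _ ⟨a, rfl⟩
      exact ⟨-a, (inv_zpow hS hSΛ hx a).symm⟩
    · rintro _ ⟨a, rfl⟩ _ ⟨b, rfl⟩
      exact ⟨a + b, (zpow_add hS hSΛ hx a b).symm⟩
  have hxH : x ∈ Set.range (L.zpow x) := ⟨1, zpow_one x⟩
  rwa [hsub _ hH (Set.range_subset_iff.2 hx)] at hxH

end NoSmallSubgroups

theorem exists_ordGE_subset [T2Space G] {S : Set G} (hS : S ×ˢ S ⊆ L.Omega) (h1 : L.one ∈ S)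
    (hSΛ : S ⊆ L.Lambda) (hSc : IsCompact S) (hsub : ∀ H, L.IsSubgroup H → H ⊆ S → H = {L.one})
    {W : Set G} (hW : W ∈ 𝓝 L.one) : ∃ n, 1 ≤ n ∧ ordGE L S n ⊆ W := by
  have hone : ∀ x ∈ ⋂ i : ℕ, ordGE L S (i + 1), x = L.one := fun x hx =>
    eq_one_of_forall_zpow_mem hS hSΛ
      (fun k => zpow_mem_of_mem_ordGE (Nat.le_succ _) (Set.mem_iInter.1 hx k.natAbs)) hsub
  obtain ⟨i, hi⟩ := exists_subset_nhds_of_isCompact' (V := fun i : ℕ => ordGE L S (i + 1))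
    (fun i j => ⟨max i j, ordGE_antitone (by omega), ordGE_antitone (by omega)⟩)
    (fun i => isCompact_ordGE hS h1 hSΛ hSc (Nat.le_add_left 1 i))
    (fun i => isClosed_ordGE hS h1 hSΛ hSc.isClosed (Nat.le_add_left 1 i))
    (fun x hx => hone x hx ▸ hW)
  exact ⟨i + 1, Nat.le_add_left 1 i, hi⟩

end LocalGroup

theorem statement_7_general {G : Type*} [TopologicalSpace G] [T2Space G]
    (L : LocalGroup G) (Un : ℕ → Set G) (hUn : L.IsProdChain Un)
    (SU : Set G) (hSU : L.IsSpecialNbhd Un SU) :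
    (∀ n : ℕ, 1 ≤ n → IsCompact (ordGE L SU n) ∧ L.IsSymmetric (ordGE L SU n) ∧
        ordGE L SU n ∈ 𝓝 L.one ∧ ordGE L SU (n + 1) ⊆ ordGE L SU n) ∧
      (∀ W ∈ 𝓝 L.one, ∃ n : ℕ, 1 ≤ n ∧ ordGE L SU n ⊆ W) ∧
      ∀ U' ∈ 𝓝 L.one, ∀ m : ℕ, ∃ N : ℕ, ∀ n ≥ N, ∀ l : List G, l.length = m →
        (∀ x ∈ l, x ∈ ordGE L SU n) → ∃ b, L.Represents l b ∧ b ∈ U' := by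
  have hS := hSU.prod_subset_omega hUn
  obtain ⟨hcpt, hnhds, hsym, -, hsub, -⟩ := hSU
  have h1 := mem_of_mem_nhds hnhds
  refine ⟨fun n hn => ⟨isCompact_ordGE hS h1 hsym.1 hcpt hn, isSymmetric_ordGE hS hsym hn,
      ordGE_mem_nhds hS hnhds n, ordGE_antitone n.le_succ⟩,
    fun W hW => exists_ordGE_subset hS h1 hsym.1 hcpt hsub hW, fun U hU m => ?_⟩
  obtain ⟨P, hP, hPU⟩ := hUn.exists_nhds_represents_mem hU m
  obtain ⟨N, -, hN⟩ := exists_ordGE_subset hS h1 hsym.1 hcpt hsub hP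
  exact ⟨N, fun n hn l hl hmem => hPU l hl fun x hx => hN (ordGE_antitone hn (hmem x hx))⟩

/-- the sets `Vₙ = {x : ord(x) ≥ n}` form a countable basis of compact
symmetric neighborhoods of `1`. -/
theorem statement_7 {G : Type*} [TopologicalSpace G] [T2Space G] [LocallyCompactSpace G]
    (L : LocalGroup G) (hstd : L.Std) (Un : ℕ → Set G) (hUn : L.IsProdChain Un)
    (hNSS : L.NSS) (SU : Set G) (hSU : L.IsSpecialNbhd Un SU) :
    (∀ n : ℕ, 1 ≤ n → IsCompact (ordGE L SU n) ∧ L.IsSymmetric (ordGE L SU n) ∧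
        ordGE L SU n ∈ 𝓝 L.one ∧ ordGE L SU (n + 1) ⊆ ordGE L SU n) ∧
      (∀ W ∈ 𝓝 L.one, ∃ n : ℕ, 1 ≤ n ∧ ordGE L SU n ⊆ W) ∧
      ∀ U' ∈ 𝓝 L.one, ∀ m : ℕ, ∃ N : ℕ, ∀ n ≥ N, ∀ l : List G, l.length = m →
        (∀ x ∈ l, x ∈ ordGE L SU n) → ∃ b, L.Represents l b ∧ b ∈ U' :=
  statement_7_general L Un hUn SU hSU
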